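/- arXiv:2203.13523 — 2 statements merged into one kernel-verified Lean document; each statement's English description precedes it below -/
import Mathlib

section
/- Let K be an algebraically closed field of characteristic p ≥ 3 and b1, …, b5 ∈ K such that h(X) = X^5 + b1*X^4 + b2*X^3 + b3*X^2 + b4*X + b5 is squarefree. Let f1, …, f6 be the Grant polynomials and U = {z ∈ K^8 : f1(z) = … = f6(z) = 0}. For a point P ∈ U write its coordinates as (z11(P), z12(P), z22(P), z111(P), z112(P), z122(P), z222(P), z(P)), and for R ∈ U define the function 𝔮_R on U by 𝔮_R(Q) = z11(Q) − z11(R) + z12(Q)·z22(R) − z12(R)·z22(Q). Then for every fixed R ∈ U, the zero set {Q ∈ U : 𝔮_R(Q) = 0} is an affine algebraic set of dimension one, i.e. the Krull dimension of its coordinate ring (the quotient of K[Z11, Z12, Z22, Z111, Z112, Z122, Z222, Z] by the vanishing ideal of this set) equals 1. -/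
set_option linter.unusedVariables false

open MvPolynomial in
/-- Grant polynomial `f1 = 2Z − Z11·Z22 + Z12² − b2·Z12 + b4`.
Variables: `0 = Z11, 1 = Z12, 2 = Z22, 3 = Z111, 4 = Z112, 5 = Z122, 6 = Z222, 7 = Z`. -/
noncomputable def grantF1 {R : Type*} [CommRing R] (b1 b2 b3 b4 b5 : R) :
    MvPolynomial (Fin 8) R :=
  2 * X 7 - X 0 * X 2 + X 1 ^ 2 - C b2 * X 1 + C b4

open MvPolynomial in
/-- Grant polynomial `f2 = Z112 − Z222·Z12 + Z122·Z22`. -/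
noncomputable def grantF2 {R : Type*} [CommRing R] (b1 b2 b3 b4 b5 : R) :
    MvPolynomial (Fin 8) R :=
  X 4 - X 6 * X 1 + X 5 * X 2

open MvPolynomial in
/-- Grant polynomial `f3 = Z111 + Z222·Z11 + Z122·Z12 − 2Z112·Z22 − 2b1·Z112 + b2·Z122`. -/
noncomputable def grantF3 {R : Type*} [CommRing R] (b1 b2 b3 b4 b5 : R) :
    MvPolynomial (Fin 8) R :=
  X 3 + X 6 * X 0 + X 5 * X 1 - 2 * X 4 * X 2 - 2 * C b1 * X 4 + C b2 * X 5

open MvPolynomial in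
/-- Grant polynomial `f4 = Z122² − Z11·Z22² + 2Z·Z22 + Z11·Z12 − b1·Z11·Z22 − b2·Z12·Z22
+ 2b1·Z − b1·b2·Z12 + b4·Z22 + b1·b4 − b5`. -/
noncomputable def grantF4 {R : Type*} [CommRing R] (b1 b2 b3 b4 b5 : R) :
    MvPolynomial (Fin 8) R :=
  X 5 ^ 2 - X 0 * X 2 ^ 2 + 2 * X 7 * X 2 + X 0 * X 1 - C b1 * X 0 * X 2
    - C b2 * X 1 * X 2 + 2 * C b1 * X 7 - C b1 * C b2 * X 1 + C b4 * X 2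
    + C (b1 * b4) - C b5

open MvPolynomial in
/-- Grant polynomial `f5 = Z222² − Z22³ − Z12·Z22 − b1·Z22² − Z11 − b2·Z22 − b3`. -/
noncomputable def grantF5 {R : Type*} [CommRing R] (b1 b2 b3 b4 b5 : R) :
    MvPolynomial (Fin 8) R :=
  X 6 ^ 2 - X 2 ^ 3 - X 1 * X 2 - C b1 * X 2 ^ 2 - X 0 - C b2 * X 2 - C b3

open MvPolynomial in
/-- Grant polynomial `f6 = Z122·Z222 − Z12·Z22² + Z − b2·Z12 − b1·Z12·Z22`. -/
noncomputable def grantF6 {R : Type*} [CommRing R] (b1 b2 b3 b4 b5 : R) :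
    MvPolynomial (Fin 8) R :=
  X 5 * X 6 - X 1 * X 2 ^ 2 + X 7 - C b2 * X 1 - C b1 * X 1 * X 2

/-- The list of the six Grant polynomials cutting out the affine part `U` of the
Jacobian of the genus 2 curve `Y² = X⁵ + b1·X⁴ + b2·X³ + b3·X² + b4·X + b5`. -/
noncomputable def grantPolys {R : Type*} [CommRing R] (b1 b2 b3 b4 b5 : R) :
    List (MvPolynomial (Fin 8) R) :=
  [grantF1 b1 b2 b3 b4 b5, grantF2 b1 b2 b3 b4 b5, grantF3 b1 b2 b3 b4 b5,
   grantF4 b1 b2 b3 b4 b5, grantF5 b1 b2 b3 b4 b5, grantF6 b1 b2 b3 b4 b5]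

/-- The bilinear expression `𝔮(Q,R) = z11(Q) − z11(R) + z12(Q)·z22(R) − z12(R)·z22(Q)`
on points of `K⁸` (coordinates `0 = Z11, 1 = Z12, 2 = Z22, …, 7 = Z`). -/
def grantQ {K : Type*} [Field K] (Q R : Fin 8 → K) : K :=
  Q 0 - R 0 + Q 1 * R 2 - R 1 * Q 2

/-!
Let `A` be the coordinate ring of `V = {Q ∈ U | 𝔮_R(Q) = 0}` and `s, u` the classes of
`Z22, Z12`. Eliminating `Z11` with `𝔮_R` and `Z` with `f1` (as `p ≠ 2`), the Grant equations
give `Z222² = W(s, u)`, `2·Z122·Z222 = G(s, u)` and `Z122² = H(s, u)`, so `u` is a root of the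
monic quartic `G² − 4HW` over `K[s]`; `Z222` and `Z122` are then integral through their
squares, and the remaining coordinates are polynomials in these. Hence `A` is integral over
`K[s]`. Conversely, for every `t ∈ K` a root `u` of the quartic and square roots of `W` and
`H` build a point of `V` with `Z22 = t`, so `s` is transcendental. An integral extension of the
polynomial ring `K[s]` has Krull dimension `1` by lying over and going up.
-/

open scoped Polynomial

section KrullDim

variable {R S : Type*} [CommRing R] [CommRing S] [Algebra R S]

theorem ringKrullDim_le_of_isIntegral [Algebra.IsIntegral R S] :
    ringKrullDim S ≤ ringKrullDim R :=
  Order.krullDim_le_of_strictMono (PrimeSpectrum.comap (algebraMap R S)) fun _ _ h ↦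
    Ideal.IsIntegral.comap_lt_comap (R := R) h

theorem ringKrullDim_le_of_hasGoingUp [Algebra.HasGoingUp R S]
    (h : Function.Surjective (PrimeSpectrum.comap (algebraMap R S))) :
    ringKrullDim R ≤ ringKrullDim S := by
  refine iSup_le fun l ↦ ?_
  obtain ⟨P, hP⟩ := h l.head
  have : P.asIdeal.LiesOver l.head.asIdeal := ⟨by rw [← hP]; rfl⟩
  obtain ⟨L, hL, -, -⟩ := Ideal.exists_ltSeries_of_hasGoingUp l P.asIdeal
  exact hL ▸ Order.LTSeries.length_le_krullDim L

theorem ringKrullDim_eq_of_isIntegral [Algebra.IsIntegral R S] [FaithfulSMul R S] :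
    ringKrullDim S = ringKrullDim R :=
  ringKrullDim_le_of_isIntegral.antisymm
    (ringKrullDim_le_of_hasGoingUp (Algebra.IsIntegral.comap_surjective R S))

end KrullDim

theorem ringKrullDim_eq_one_of_transcendental_of_isIntegral {K A : Type*} [Field K] [CommRing A]
    [Algebra K A] {s : A} (hs : Transcendental K s)
    (hint : (Polynomial.aeval (R := K) s).toRingHom.IsIntegral) :
    ringKrullDim A = 1 := by
  algebraize [(Polynomial.aeval (R := K) s).toRingHom]
  have : FaithfulSMul K[X] A :=
    (faithfulSMul_iff_algebraMap_injective _ _).mpr (transcendental_iff_injective.mp hs)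
  rw [ringKrullDim_eq_of_isIntegral (R := K[X]), Polynomial.ringKrullDim_of_isNoetherianRing,
    ringKrullDim_eq_zero_of_field]
  rfl

section CoordinateRing

open MvPolynomial

variable {σ : Type*}

theorem aeval_quotient_mk_X {R : Type*} [CommRing R] (I : Ideal (MvPolynomial σ R))
    (P : MvPolynomial σ R) :
    aeval (fun i ↦ Ideal.Quotient.mk I (X i)) P = Ideal.Quotient.mk I P :=
  (congrArg (· P) (aeval_unique (Ideal.Quotient.mkₐ R I))).symm

theorem transcendental_quotient_mk_X {K : Type*} [Field K] {V : Set (σ → K)} {i : σ}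
    (hV : ((fun x ↦ x i) '' V).Infinite) :
    Transcendental K (Ideal.Quotient.mk (vanishingIdeal K V) (X i)) := by
  rw [transcendental_iff_injective, injective_iff_map_eq_zero]
  intro g hg
  have hmem : Polynomial.aeval (X i) g ∈ vanishingIdeal K V := by
    rw [← Ideal.Quotient.eq_zero_iff_mem, ← hg]
    exact (Polynomial.aeval_algHom_apply (Ideal.Quotient.mkₐ K (vanishingIdeal K V)) _ g).symm
  refine Polynomial.eq_zero_of_infinite_isRoot g (hV.mono ?_)
  rintro _ ⟨x, hx, rfl⟩
  have := mem_vanishingIdeal_iff.mp hmem x hx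
  rwa [← Polynomial.aeval_algHom_apply, aeval_X, Polynomial.coe_aeval_eq_eval] at this

theorem Algebra.IsIntegral.of_aeval_surjective {K R A : Type*} [CommRing K] [CommRing R]
    [CommRing A] [Algebra K R] [Algebra K A] [Algebra R A] [IsScalarTower K R A] {z : σ → A}
    (hz : Function.Surjective (aeval z : MvPolynomial σ K →ₐ[K] A))
    (hint : ∀ i, IsIntegral R (z i)) : Algebra.IsIntegral R A := by
  rw [← integralClosure_eq_top_iff, ← (Subalgebra.restrictScalars_injective K).eq_iff,
    Subalgebra.restrictScalars_top, ← top_le_iff, ← (AlgHom.range_eq_top _).mpr hz,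
    ← Algebra.adjoin_range_eq_range_aeval, Algebra.adjoin_le_iff]
  rintro _ ⟨i, rfl⟩
  exact hint i

end CoordinateRing

section Discriminant

theorem discrim_sq_two_mul_sq {A : Type*} [CommRing A] (v w : A) :
    discrim (v ^ 2) (2 * (v * w)) (w ^ 2) = 0 := by
  unfold discrim
  ring

theorem exists_sq_eq_of_discrim_eq_zero {K : Type*} [Field K] [IsAlgClosed K] (h2 : (2 : K) ≠ 0)
    {a b c : K} (h : discrim a b c = 0) : ∃ v w, v ^ 2 = a ∧ 2 * (v * w) = b ∧ w ^ 2 = c := by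
  obtain ⟨w, hw⟩ := IsAlgClosed.exists_pow_nat_eq c two_pos
  unfold discrim at h
  by_cases hw0 : w = 0
  · obtain ⟨v, hv⟩ := IsAlgClosed.exists_pow_nat_eq a two_pos
    subst hw0
    have hb : b = 0 := (pow_eq_zero_iff two_ne_zero).mp (by rw [← hw] at h; linear_combination h)
    exact ⟨v, 0, hv, by simp [hb], hw⟩
  · refine ⟨b / (2 * w), w, ?_, by field_simp, hw⟩
    field_simp
    linear_combination h - 4 * a * hw

end Discriminant

section GrantEquations

open MvPolynomial

variable {R A : Type*} [CommRing R] [CommRing A] [Algebra R A]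

theorem aeval_grantPolys_eq_zero_iff (b1 b2 b3 b4 b5 : R) (z : Fin 8 → A) :
    (∀ f ∈ grantPolys b1 b2 b3 b4 b5, aeval z f = 0) ↔
      2 * z 7 - z 0 * z 2 + z 1 ^ 2 - algebraMap R A b2 * z 1 + algebraMap R A b4 = 0 ∧
      z 4 - z 6 * z 1 + z 5 * z 2 = 0 ∧
      z 3 + z 6 * z 0 + z 5 * z 1 - 2 * z 4 * z 2 - 2 * algebraMap R A b1 * z 4
        + algebraMap R A b2 * z 5 = 0 ∧
      z 5 ^ 2 - z 0 * z 2 ^ 2 + 2 * z 7 * z 2 + z 0 * z 1 - algebraMap R A b1 * z 0 * z 2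
        - algebraMap R A b2 * z 1 * z 2 + 2 * algebraMap R A b1 * z 7
        - algebraMap R A b1 * algebraMap R A b2 * z 1 + algebraMap R A b4 * z 2
        + algebraMap R A b1 * algebraMap R A b4 - algebraMap R A b5 = 0 ∧
      z 6 ^ 2 - z 2 ^ 3 - z 1 * z 2 - algebraMap R A b1 * z 2 ^ 2 - z 0
        - algebraMap R A b2 * z 2 - algebraMap R A b3 = 0 ∧
      z 5 * z 6 - z 1 * z 2 ^ 2 + z 7 - algebraMap R A b2 * z 1
        - algebraMap R A b1 * z 1 * z 2 = 0 := by
  simp only [grantPolys, List.mem_cons, List.not_mem_nil, or_false, forall_eq_or_imp,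
    forall_eq, grantF1, grantF2, grantF3, grantF4, grantF5, grantF6, map_sub, map_add, map_mul,
    map_pow, map_ofNat, aeval_X, aeval_C]

end GrantEquations

section GrantQuartic

variable {A B : Type*} [CommRing A] [CommRing B] (b1 b2 b3 b4 b5 r0 r1 r2 : A)

/- With `s = z22`, `u = z12` and `(r0, r1, r2) = (z11, z12, z22)(R)`, these are the values of
`z222²`, `2·z122·z222` and `z122²` on the curve `𝔮_R = 0`. -/
def grantW (s u : A) : A :=
  s ^ 3 + b1 * s ^ 2 + (b2 + r1) * s + (b3 + r0) + u * (s - r2)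

def grantG (s u : A) : A :=
  u ^ 2 + u * (2 * s ^ 2 + (2 * b1 + r2) * s + b2) - r1 * s ^ 2 - r0 * s + b4

def grantH (s u : A) : A :=
  (s + b1 + r2) * u ^ 2 - (r0 + r1 * s) * u + b5

def grantQuartic (s u : A) : A :=
  discrim (grantH b1 b5 r0 r1 r2 s u) (grantG b1 b2 b4 r0 r1 r2 s u) (grantW b1 b2 b3 r0 r1 r2 s u)

theorem map_grantQuartic (φ : A →+* B) (s u : A) :
    φ (grantQuartic b1 b2 b3 b4 b5 r0 r1 r2 s u) =
      grantQuartic (φ b1) (φ b2) (φ b3) (φ b4) (φ b5) (φ r0) (φ r1) (φ r2) (φ s) (φ u) := by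
  simp [grantQuartic, discrim, grantG, grantH, grantW, map_ofNat]

variable {b1 b2 b3 b4 b5 r0 r1 r2} {z : Fin 8 → A}

theorem sq_eq_grantW (h5 : z 6 ^ 2 - z 2 ^ 3 - z 1 * z 2 - b1 * z 2 ^ 2 - z 0 - b2 * z 2 - b3 = 0)
    (hq : z 0 - r0 + z 1 * r2 - r1 * z 2 = 0) :
    z 6 ^ 2 = grantW b1 b2 b3 r0 r1 r2 (z 2) (z 1) := by
  unfold grantW
  linear_combination h5 + hq

theorem two_mul_eq_grantG (h1 : 2 * z 7 - z 0 * z 2 + z 1 ^ 2 - b2 * z 1 + b4 = 0)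
    (h6 : z 5 * z 6 - z 1 * z 2 ^ 2 + z 7 - b2 * z 1 - b1 * z 1 * z 2 = 0)
    (hq : z 0 - r0 + z 1 * r2 - r1 * z 2 = 0) :
    2 * (z 5 * z 6) = grantG b1 b2 b4 r0 r1 r2 (z 2) (z 1) := by
  unfold grantG
  linear_combination 2 * h6 - h1 - z 2 * hq

theorem sq_eq_grantH (h1 : 2 * z 7 - z 0 * z 2 + z 1 ^ 2 - b2 * z 1 + b4 = 0)
    (h4 : z 5 ^ 2 - z 0 * z 2 ^ 2 + 2 * z 7 * z 2 + z 0 * z 1 - b1 * z 0 * z 2 - b2 * z 1 * z 2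
      + 2 * b1 * z 7 - b1 * b2 * z 1 + b4 * z 2 + b1 * b4 - b5 = 0)
    (hq : z 0 - r0 + z 1 * r2 - r1 * z 2 = 0) :
    z 5 ^ 2 = grantH b1 b5 r0 r1 r2 (z 2) (z 1) := by
  unfold grantH
  linear_combination h4 - (z 2 + b1) * h1 - z 1 * hq

theorem grantQuartic_eq_zero (h1 : 2 * z 7 - z 0 * z 2 + z 1 ^ 2 - b2 * z 1 + b4 = 0)
    (h4 : z 5 ^ 2 - z 0 * z 2 ^ 2 + 2 * z 7 * z 2 + z 0 * z 1 - b1 * z 0 * z 2 - b2 * z 1 * z 2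
      + 2 * b1 * z 7 - b1 * b2 * z 1 + b4 * z 2 + b1 * b4 - b5 = 0)
    (h5 : z 6 ^ 2 - z 2 ^ 3 - z 1 * z 2 - b1 * z 2 ^ 2 - z 0 - b2 * z 2 - b3 = 0)
    (h6 : z 5 * z 6 - z 1 * z 2 ^ 2 + z 7 - b2 * z 1 - b1 * z 1 * z 2 = 0)
    (hq : z 0 - r0 + z 1 * r2 - r1 * z 2 = 0) :
    grantQuartic b1 b2 b3 b4 b5 r0 r1 r2 (z 2) (z 1) = 0 := by
  rw [grantQuartic, ← sq_eq_grantH h1 h4 hq, ← two_mul_eq_grantG h1 h6 hq, ← sq_eq_grantW h5 hq]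
  exact discrim_sq_two_mul_sq _ _

open Polynomial

theorem monic_grantQuartic {K : Type*} [CommRing K] [Nontrivial K] (b1 b2 b3 b4 b5 r0 r1 r2 : K) :
    (grantQuartic (C (C b1)) (C (C b2)) (C (C b3)) (C (C b4)) (C (C b5)) (C (C r0)) (C (C r1))
      (C (C r2)) (C X) X : K[X][X]).Monic := by
  unfold grantQuartic discrim grantG grantH grantW
  monicity!

theorem natDegree_grantQuartic {K : Type*} [CommRing K] [Nontrivial K]
    (b1 b2 b3 b4 b5 r0 r1 r2 : K) :
    (grantQuartic (C (C b1)) (C (C b2)) (C (C b3)) (C (C b4)) (C (C b5)) (C (C r0)) (C (C r1))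
      (C (C r2)) (C X) X : K[X][X]).natDegree = 4 := by
  unfold grantQuartic discrim grantG grantH grantW
  compute_degree!

theorem exists_grantQuartic_eq_zero {K : Type*} [Field K] [IsAlgClosed K]
    (b1 b2 b3 b4 b5 r0 r1 r2 t : K) : ∃ u, grantQuartic b1 b2 b3 b4 b5 r0 r1 r2 t u = 0 := by
  have hmonic := monic_grantQuartic b1 b2 b3 b4 b5 r0 r1 r2
  obtain ⟨u, hu⟩ := IsAlgClosed.exists_root (p := (grantQuartic (C (C b1)) (C (C b2)) (C (C b3))
      (C (C b4)) (C (C b5)) (C (C r0)) (C (C r1)) (C (C r2)) (C X) X).map (evalRingHom t))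
    (by rw [degree_eq_natDegree (hmonic.map _).ne_zero, hmonic.natDegree_map,
      natDegree_grantQuartic]; decide)
  refine ⟨u, ?_⟩
  rw [IsRoot, eval_map, ← coe_eval₂RingHom, map_grantQuartic] at hu
  simpa using hu

end GrantQuartic

section GrantIntegrality

theorem grant_coord_mem_of_mem {K A : Type*} [Field K] [CommRing A] [Algebra K A]
    (h2 : (2 : K) ≠ 0) {b1 b2 b3 b4 b5 r0 r1 r2 : K} {z : Fin 8 → A}
    (hz : ∀ f ∈ grantPolys b1 b2 b3 b4 b5, MvPolynomial.aeval z f = 0)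
    (hq : z 0 - algebraMap K A r0 + z 1 * algebraMap K A r2 - algebraMap K A r1 * z 2 = 0)
    {T : Subalgebra K A} (hz1 : z 1 ∈ T) (hz2 : z 2 ∈ T) (hz5 : z 5 ∈ T) (hz6 : z 6 ∈ T)
    (i : Fin 8) : z i ∈ T := by
  obtain ⟨hf1, hf2, hf3, -, -, -⟩ := (aeval_grantPolys_eq_zero_iff b1 b2 b3 b4 b5 z).mp hz
  have hz0 : z 0 ∈ T := by
    rw [show z 0 = algebraMap K A r0 - z 1 * algebraMap K A r2 + algebraMap K A r1 * z 2 by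
      linear_combination hq]
    apply_rules [add_mem, sub_mem, mul_mem, Subalgebra.algebraMap_mem]
  have h2inv : algebraMap K A 2⁻¹ * 2 = 1 := by
    rw [← map_ofNat (algebraMap K A) 2, ← map_mul, inv_mul_cancel₀ h2, map_one]
  have hz7 : z 7 ∈ T := by
    rw [show z 7 = algebraMap K A 2⁻¹ * (z 0 * z 2 - z 1 ^ 2 + algebraMap K A b2 * z 1
      - algebraMap K A b4) by linear_combination algebraMap K A 2⁻¹ * hf1 - z 7 * h2inv]
    apply_rules [add_mem, sub_mem, mul_mem, pow_mem, Subalgebra.algebraMap_mem]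
  have hz4 : z 4 ∈ T := by
    rw [show z 4 = z 6 * z 1 - z 5 * z 2 by linear_combination hf2]
    apply_rules [sub_mem, mul_mem]
  have hz3 : z 3 ∈ T := by
    rw [show z 3 = -(z 6 * z 0) - z 5 * z 1 + 2 * z 4 * z 2 + 2 * algebraMap K A b1 * z 4
      - algebraMap K A b2 * z 5 by linear_combination hf3]
    apply_rules [add_mem, sub_mem, mul_mem, neg_mem, Subalgebra.algebraMap_mem, ofNat_mem]
  fin_cases i <;> assumption

open Polynomial

theorem isIntegral_grant_coord {K A : Type*} [Field K] [CommRing A] [Algebra K A] [Algebra K[X] A]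
    [IsScalarTower K K[X] A] (h2 : (2 : K) ≠ 0) {b1 b2 b3 b4 b5 r0 r1 r2 : K} {z : Fin 8 → A}
    (hz : ∀ f ∈ grantPolys b1 b2 b3 b4 b5, MvPolynomial.aeval z f = 0)
    (hq : z 0 - algebraMap K A r0 + z 1 * algebraMap K A r2 - algebraMap K A r1 * z 2 = 0)
    (hs : algebraMap K[X] A X = z 2) (i : Fin 8) : IsIntegral K[X] (z i) := by
  obtain ⟨hf1, -, -, hf4, hf5, hf6⟩ := (aeval_grantPolys_eq_zero_iff b1 b2 b3 b4 b5 z).mp hz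
  let T := (integralClosure K[X] A).restrictScalars K
  have hz2 : z 2 ∈ T := hs ▸ isIntegral_algebraMap
  have hz1 : z 1 ∈ T := by
    refine ⟨_, monic_grantQuartic b1 b2 b3 b4 b5 r0 r1 r2, ?_⟩
    have hC (c : K) : algebraMap K[X] A (C c) = algebraMap K A c :=
      (IsScalarTower.algebraMap_apply K K[X] A c).symm
    rw [← aeval_def, ← AlgHom.coe_toRingHom, map_grantQuartic]
    simp only [AlgHom.coe_toRingHom, aeval_C, aeval_X, hs, hC]
    exact grantQuartic_eq_zero hf1 hf4 hf5 hf6 hq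
  have hz6 : z 6 ∈ T := by
    refine IsIntegral.of_pow two_pos (show z 6 ^ 2 ∈ T from ?_)
    rw [sq_eq_grantW hf5 hq, grantW]
    apply_rules [add_mem, sub_mem, mul_mem, pow_mem, Subalgebra.algebraMap_mem]
  have hz5 : z 5 ∈ T := by
    refine IsIntegral.of_pow two_pos (show z 5 ^ 2 ∈ T from ?_)
    rw [sq_eq_grantH hf1 hf4 hq, grantH]
    apply_rules [add_mem, sub_mem, mul_mem, pow_mem, Subalgebra.algebraMap_mem]
  exact grant_coord_mem_of_mem h2 hz hq hz1 hz2 hz5 hz6 i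

end GrantIntegrality

section GrantCurve

open MvPolynomial

variable {K : Type*} [Field K]

def grantCurve (b1 b2 b3 b4 b5 : K) (R : Fin 8 → K) : Set (Fin 8 → K) :=
  {Q | (∀ f ∈ grantPolys b1 b2 b3 b4 b5, eval Q f = 0) ∧ grantQ Q R = 0}

theorem exists_mem_grantCurve_apply_two_eq [IsAlgClosed K] (h2 : (2 : K) ≠ 0)
    (b1 b2 b3 b4 b5 : K) (R : Fin 8 → K) (t : K) :
    ∃ x ∈ grantCurve b1 b2 b3 b4 b5 R, x 2 = t := by
  obtain ⟨u, hu⟩ := exists_grantQuartic_eq_zero b1 b2 b3 b4 b5 (R 0) (R 1) (R 2) t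
  obtain ⟨v, w, hH, hG, hW⟩ := exists_sq_eq_of_discrim_eq_zero h2 hu
  unfold grantH at hH
  unfold grantG at hG
  unfold grantW at hW
  set z0 := R 0 + R 1 * t - R 2 * u with hz0
  set z7 := (z0 * t - u ^ 2 + b2 * u - b4) / 2
  have h7 : 2 * z7 = z0 * t - u ^ 2 + b2 * u - b4 := mul_div_cancel₀ _ h2
  set z4 := w * u - v * t
  refine ⟨![z0, u, t, -(w * z0) - v * u + 2 * z4 * t + 2 * b1 * z4 - b2 * v, z4, v, w, z7],
    ⟨?_, by simp [grantQ, z0]; ring⟩, rfl⟩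
  refine (aeval_grantPolys_eq_zero_iff b1 b2 b3 b4 b5 _).mpr ?_
  simp only [Algebra.algebraMap_self, RingHom.id_apply, Matrix.cons_val]
  refine ⟨by linear_combination h7, by ring, by ring, ?_, by linear_combination hW + hz0, ?_⟩
  · linear_combination hH + (t + b1) * h7 - (u + t * (t + b1)) * hz0
  · apply mul_left_cancel₀ h2
    linear_combination hG - t * hz0 + h7

theorem isIntegral_aeval_grantCurve (h2 : (2 : K) ≠ 0) (b1 b2 b3 b4 b5 : K) (R : Fin 8 → K) :
    (Polynomial.aeval (R := K) (Ideal.Quotient.mk (vanishingIdeal K (grantCurve b1 b2 b3 b4 b5 R))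
      (X 2))).toRingHom.IsIntegral := by
  set I := vanishingIdeal K (grantCurve b1 b2 b3 b4 b5 R)
  set z : Fin 8 → MvPolynomial (Fin 8) K ⧸ I := fun i ↦ Ideal.Quotient.mk I (X i)
  have hvanish (P : MvPolynomial (Fin 8) K)
      (hP : ∀ x ∈ grantCurve b1 b2 b3 b4 b5 R, eval x P = 0) : aeval z P = 0 := by
    rw [aeval_quotient_mk_X, Ideal.Quotient.eq_zero_iff_mem, mem_vanishingIdeal_iff]
    exact hP
  have hq := hvanish (X 0 - C (R 0) + X 1 * C (R 2) - C (R 1) * X 2) fun x hx ↦ by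
    simpa [grantQ] using hx.2
  simp only [map_sub, map_add, map_mul, aeval_X, aeval_C] at hq
  let : Algebra K[X] (MvPolynomial (Fin 8) K ⧸ I) := (Polynomial.aeval (z 2)).toRingHom.toAlgebra
  have : IsScalarTower K K[X] (MvPolynomial (Fin 8) K ⧸ I) :=
    .of_algebraMap_eq fun c ↦ (Polynomial.aeval_C (z 2) c).symm
  have hint : Algebra.IsIntegral K[X] (MvPolynomial (Fin 8) K ⧸ I) :=
    .of_aeval_surjective (fun a ↦ (Ideal.Quotient.mk_surjective a).imp fun P hP ↦
      (aeval_quotient_mk_X I P).trans hP)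
      (isIntegral_grant_coord h2 (fun f hf ↦ hvanish f fun x hx ↦ hx.1 f hf) hq
        (Polynomial.aeval_X _))
  exact hint.isIntegral

end GrantCurve

open MvPolynomial Polynomial in
theorem stmt_6_general {K : Type*} [Field K] [IsAlgClosed K] (p : ℕ) [CharP K p] (hp : 3 ≤ p)
    (b1 b2 b3 b4 b5 : K)
    (U : Set (Fin 8 → K))
    (hU : U = {z : Fin 8 → K | ∀ fi ∈ grantPolys b1 b2 b3 b4 b5, eval z fi = 0}) :
    ∀ R ∈ U,
      ringKrullDim (MvPolynomial (Fin 8) K ⧸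
        vanishingIdeal K {Q ∈ U | grantQ Q R = 0}) = ((1 : ℕ∞) : WithBot ℕ∞) := by
  rintro R -
  subst hU
  have h2 : (2 : K) ≠ 0 := Ring.two_ne_zero (by rw [ringChar.eq K p]; omega)
  refine ringKrullDim_eq_one_of_transcendental_of_isIntegral (transcendental_quotient_mk_X ?_)
    (isIntegral_aeval_grantCurve h2 b1 b2 b3 b4 b5 R)
  refine Set.infinite_univ.mono fun t _ ↦ ?_
  obtain ⟨x, hx, rfl⟩ := exists_mem_grantCurve_apply_two_eq h2 b1 b2 b3 b4 b5 R t
  exact ⟨x, hx, rfl⟩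

open MvPolynomial Polynomial in
/-- Over an algebraically closed field `K` of characteristic `p ≥ 3`
with `h(X) = X⁵ + b1·X⁴ + b2·X³ + b3·X² + b4·X + b5` squarefree, let `U ⊆ K⁸` be the
common zero set of the six Grant polynomials. Then for every `R ∈ U`, the zero set
`{Q ∈ U : 𝔮_R(Q) = 0}` has dimension one: the Krull dimension of its coordinate ring
(the polynomial ring modulo its vanishing ideal) equals `1`. -/
theorem stmt_6 {K : Type*} [Field K] [IsAlgClosed K] (p : ℕ) [CharP K p] (hp : 3 ≤ p)
    (b1 b2 b3 b4 b5 : K)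
    (hsf : Squarefree (Polynomial.X ^ 5 + Polynomial.C b1 * Polynomial.X ^ 4 +
      Polynomial.C b2 * Polynomial.X ^ 3 + Polynomial.C b3 * Polynomial.X ^ 2 +
      Polynomial.C b4 * Polynomial.X + Polynomial.C b5 : Polynomial K))
    (U : Set (Fin 8 → K))
    (hU : U = {z : Fin 8 → K | ∀ fi ∈ grantPolys b1 b2 b3 b4 b5, eval z fi = 0}) :
    ∀ R ∈ U,
      ringKrullDim (MvPolynomial (Fin 8) K ⧸
        vanishingIdeal K {Q ∈ U | grantQ Q R = 0}) = ((1 : ℕ∞) : WithBot ℕ∞) :=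
  stmt_6_general p hp b1 b2 b3 b4 b5 U hU
end

section
/- Let G be a finite additive abelian group whose 2-torsion subgroup satisfies #{x ∈ G : 2·x = 0} ≤ 16. Let Θ be a subset of G, let L ≥ 1 be an integer, and let D_0, D_1, …, D_L ∈ G. If #G > (L+1)·#Θ + 16·L, then there exists R ∈ G such that D_i + R ∉ Θ for all 0 ≤ i ≤ L, and D_L + R ≠ −(D_j + R) for all 0 ≤ j ≤ L−1. -/
/-!
Each of the conditions on `R` fails on a small set. `D i + R ∈ Θ` says that `R` lies in a
translate of `Θ`, which has `#Θ` elements. `D L + R = -(D j + R)` says `2 • R = -(D L + D j)`,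
whose solutions form a coset of the 2-torsion subgroup (or are empty), so there are at most
16 of them. The `L + 1` sets of the first kind and the `L` sets of the second kind together
have fewer than `#G` elements, so some `R` lies outside all of them.
-/

open Set Finset

theorem Set.exists_notMem_of_ncard_lt_card {α : Type*} {s : Set α} (h : s.ncard < Nat.card α) :
    ∃ x, x ∉ s := by
  by_contra! hs
  rw [eq_univ_of_forall hs, ncard_univ] at h
  exact lt_irrefl _ h

theorem Set.ncard_preimage_add_left {G : Type*} [AddGroup G] (a : G) (s : Set G) :
    ((a + ·) ⁻¹' s).ncard = s.ncard :=
  ncard_preimage_of_injective_subset_range (add_right_injective a)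
    fun y _ => ⟨-a + y, add_neg_cancel_left a y⟩

theorem AddMonoidHom.ncard_preimage_singleton_le {G H : Type*} [AddGroup G] [AddGroup H]
    (f : G →+ H) (c : H) : (f ⁻¹' {c}).ncard ≤ (f ⁻¹' {0}).ncard := by
  rcases (f ⁻¹' {c}).eq_empty_or_nonempty with hc | ⟨x₀, hx₀⟩
  · simp [hc]
  · have hfiber : f ⁻¹' {c} = (· - x₀) ⁻¹' (f ⁻¹' {0}) := by
      ext x
      simp_all [sub_eq_zero]
    rw [hfiber, ncard_preimage_of_injective_subset_range sub_left_injective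
      fun y _ => ⟨y + x₀, add_sub_cancel_right y x₀⟩]

theorem add_eq_neg_add_iff_two_nsmul {G : Type*} [AddCommGroup G] (a b x : G) :
    a + x = -(b + x) ↔ 2 • x = -(a + b) := by
  have hsum : a + x + (b + x) = 2 • x + (a + b) := by abel
  rw [eq_neg_iff_add_eq_zero, eq_neg_iff_add_eq_zero, hsum]

theorem stmt_9_general {G : Type*} [AddCommGroup G] [Fintype G]
    (h2 : {x : G | 2 • x = 0}.ncard ≤ 16)
    (Θ : Set G) (L : ℕ) (D : ℕ → G)
    (hcard : (L + 1) * Θ.ncard + 16 * L < Fintype.card G) :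
    ∃ R : G, (∀ i ≤ L, D i + R ∉ Θ) ∧ (∀ j < L, D L + R ≠ -(D j + R)) := by
  set bad : Set G := (⋃ i ∈ range (L + 1), (D i + ·) ⁻¹' Θ) ∪
    ⋃ j ∈ range L, nsmulAddMonoidHom 2 ⁻¹' {-(D L + D j)}
  have hbad : bad.ncard < Nat.card G := calc
    bad.ncard ≤ ∑ i ∈ range (L + 1), ((D i + ·) ⁻¹' Θ).ncard +
        ∑ j ∈ range L, (nsmulAddMonoidHom 2 ⁻¹' {-(D L + D j)}).ncard :=
      (ncard_union_le _ _).trans (add_le_add (set_ncard_biUnion_le _ _) (set_ncard_biUnion_le _ _))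
    _ ≤ ∑ i ∈ range (L + 1), Θ.ncard + ∑ j ∈ range L, 16 :=
      add_le_add (sum_le_sum fun i _ => (ncard_preimage_add_left (D i) Θ).le)
        (sum_le_sum fun j _ => (AddMonoidHom.ncard_preimage_singleton_le _ _).trans h2)
    _ < Nat.card G := by simpa [Nat.card_eq_fintype_card, mul_comm] using hcard
  obtain ⟨R, hR⟩ := exists_notMem_of_ncard_lt_card hbad
  refine ⟨R, fun i hi hmem => hR ?_, fun j hj heq => hR ?_⟩
  · exact Or.inl (mem_iUnion₂.2 ⟨i, Finset.mem_range.2 (Nat.lt_succ_of_le hi), hmem⟩)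
  · exact Or.inr (mem_iUnion₂.2 ⟨j, Finset.mem_range.2 hj,
      ((add_eq_neg_add_iff_two_nsmul _ _ _).1 heq :)⟩)

/-- Let `G` be a finite additive abelian group whose 2-torsion has at
most 16 elements, let `Θ ⊆ G`, let `L ≥ 1` and `D_0, …, D_L ∈ G`. If
`#G > (L+1)·#Θ + 16·L`, then there is an `R ∈ G` with `D_i + R ∉ Θ` for all `i ≤ L`
and `D_L + R ≠ −(D_j + R)` for all `j < L`. -/
theorem stmt_9 {G : Type*} [AddCommGroup G] [Fintype G]
    (h2 : {x : G | 2 • x = 0}.ncard ≤ 16)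
    (Θ : Set G) (L : ℕ) (hL : 1 ≤ L) (D : ℕ → G)
    (hcard : (L + 1) * Θ.ncard + 16 * L < Fintype.card G) :
    ∃ R : G, (∀ i ≤ L, D i + R ∉ Θ) ∧ (∀ j < L, D L + R ≠ -(D j + R)) :=
  stmt_9_general h2 Θ L D hcard
end
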